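/- arXiv:0801.3120 — 3 statements merged into one kernel-verified Lean document; each statement's English description precedes it below -/
import Mathlib

section
/- Let K_1,…,K_N be distinct complex numbers and let f_i(u) = e^{K_i u}(u^{λ_i} + f_{i1} u^{λ_i − 1} + ⋯ + f_{iλ_i}) for i = 1,…,N, where λ_1 ≥ ⋯ ≥ λ_N ≥ 0 are integers with Σλ_i = n. Then the Wronskian Wr(f_1,…,f_N) equals e^{(ΣK_i)u} · ∏_{1≤i<j≤N}(K_j − K_i) · p(u), where p(u) is a monic polynomial in u of degree n. -/
set_option maxHeartbeats 1000000

open scoped BigOperators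
open Polynomial

private noncomputable def LKop (K : ℂ) : ℂ[X] → ℂ[X] := fun r => C K * r + derivative r

private lemma LKop_iter_bound (K : ℂ) (d j : ℕ) :
    ∀ p : ℂ[X], p.natDegree ≤ d →
      ((LKop K)^[j] p).natDegree ≤ d ∧ ((LKop K)^[j] p).coeff d = K ^ j * p.coeff d := by
  induction j with
  | zero => intro p hp; simp [hp]
  | succ j ih =>
    intro p hp
    have hderiv : (derivative p).natDegree ≤ d :=
      (natDegree_derivative_le p).trans (le_trans (Nat.sub_le _ _) hp)
    have hdeg : (LKop K p).natDegree ≤ d :=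
      (natDegree_add_le _ _).trans
        (max_le ((natDegree_C_mul_le _ _).trans hp) hderiv)
    have hco : (LKop K p).coeff d = K * p.coeff d := by
      have h1 : p.coeff (d + 1) = 0 :=
        coeff_eq_zero_of_natDegree_lt (lt_of_le_of_lt hp (Nat.lt_succ_self d))
      simp [LKop, coeff_add, coeff_C_mul, coeff_derivative, h1]
    obtain ⟨h2, h3⟩ := ih (LKop K p) hdeg
    refine ⟨by rwa [Function.iterate_succ_apply], ?_⟩
    rw [Function.iterate_succ_apply, h3, hco, pow_succ]
    ring

private lemma exp_mul_iteratedDeriv (K : ℂ) (j : ℕ) :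
    ∀ (p : ℂ[X]) (u : ℂ),
      iteratedDeriv j (fun u => Complex.exp (K * u) * p.eval u) u
        = Complex.exp (K * u) * (((LKop K)^[j]) p).eval u := by
  induction j with
  | zero => intro p u; simp
  | succ j ih =>
    intro p u
    rw [iteratedDeriv_succ']
    have hderiv : (deriv fun u => Complex.exp (K * u) * p.eval u)
        = fun u => Complex.exp (K * u) * (LKop K p).eval u := by
      funext x
      have h1 : HasDerivAt (fun x : ℂ => Complex.exp (K * x)) (Complex.exp (K * x) * K) x := by
        simpa using ((hasDerivAt_id x).const_mul K).cexp
      have h2 : HasDerivAt (fun x : ℂ => p.eval x) (p.derivative.eval x) x := p.hasDerivAt x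
      have h : deriv (fun u => Complex.exp (K * u) * p.eval u) x = _ := (h1.mul h2).deriv
      rw [h]
      simp [LKop]
      ring
    rw [hderiv, ih, Function.iterate_succ_apply]

private lemma coeff_prod_deg {ι : Type*} (s : Finset ι) (f : ι → ℂ[X]) (d : ι → ℕ)
    (h : ∀ i ∈ s, (f i).natDegree ≤ d i) :
    (∏ i ∈ s, f i).coeff (∑ i ∈ s, d i) = ∏ i ∈ s, (f i).coeff (d i) := by
  induction s using Finset.cons_induction with
  | empty => simp
  | cons a s ha ih =>
    rw [Finset.prod_cons, Finset.sum_cons,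
      Polynomial.coeff_mul_add_eq_of_natDegree_le (h a (Finset.mem_cons_self a s))
        ((Polynomial.natDegree_prod_le s f).trans
          (Finset.sum_le_sum fun i hi => h i (Finset.mem_cons_of_mem hi))),
      ih fun i hi => h i (Finset.mem_cons_of_mem hi), Finset.prod_cons]

/-- The Wronskian of quasi-exponentials
`fᵢ(u) = e^{Kᵢu}(u^{λᵢ} + fᵢ₁u^{λᵢ−1} + ⋯ + f_{iλᵢ})`, with `K₁,…,K_N` distinct and
`λ₁ ≥ ⋯ ≥ λ_N ≥ 0`, `Σλᵢ = n`, equals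
`e^{(ΣKᵢ)u} ∏_{i<j}(Kⱼ−Kᵢ) p(u)` for a monic polynomial `p` of degree `n`. -/
theorem wronskian_of_quasiExponentials (N n : ℕ) (K : Fin N → ℂ)
    (hK : Function.Injective K) (l : Fin N → ℕ) (hl : Antitone l) (hn : ∑ i, l i = n)
    (q : Fin N → Polynomial ℂ) (hq : ∀ i, (q i).Monic) (hdeg : ∀ i, (q i).natDegree = l i)
    (f : Fin N → ℂ → ℂ)
    (hf : ∀ i u, f i u = Complex.exp (K i * u) * (q i).eval u) :
    ∃ p : Polynomial ℂ, p.Monic ∧ p.natDegree = n ∧ ∀ u : ℂ,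
      Matrix.det (Matrix.of fun i j : Fin N => iteratedDeriv (j : ℕ) (f i) u) =
        Complex.exp ((∑ i, K i) * u) *
          (∏ c ∈ Finset.univ.filter (fun c : Fin N × Fin N => c.1 < c.2), (K c.2 - K c.1)) *
          p.eval u := by
  classical
  set V : ℂ :=
    ∏ c ∈ Finset.univ.filter (fun c : Fin N × Fin N => c.1 < c.2), (K c.2 - K c.1) with hV
  set A : Matrix (Fin N) (Fin N) ℂ[X] :=
    Matrix.of (fun i j : Fin N => (LKop (K i))^[(j : ℕ)] (q i)) with hA
  set P : ℂ[X] := A.det with hP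
  -- entries
  have hA_deg : ∀ i j : Fin N, (A i j).natDegree ≤ l i := fun i j => by
    simpa [hA] using (LKop_iter_bound (K i) (l i) (j : ℕ) (q i) (le_of_eq (hdeg i))).1
  have hA_coeff : ∀ i j : Fin N, (A i j).coeff (l i) = K i ^ (j : ℕ) := fun i j => by
    have := (LKop_iter_bound (K i) (l i) (j : ℕ) (q i) (le_of_eq (hdeg i))).2
    have hlead : (q i).coeff (l i) = 1 := by
      rw [← hdeg i]; exact (hq i)
    simpa [hlead, hA] using this
  -- V as a Vandermonde determinant
  have hVdet : (Matrix.vandermonde K).det = V := by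
    rw [Matrix.det_vandermonde, hV, Finset.prod_filter, Fintype.prod_prod_type]
    refine Finset.prod_congr rfl fun i _ => ?_
    rw [← Finset.prod_filter]
    apply Finset.prod_congr _ fun j _ => rfl
    ext j
    simp [Finset.mem_Ioi]
  -- V is nonzero
  have hVne : V ≠ 0 := by
    rw [hV, Finset.prod_ne_zero_iff]
    intro c hc
    rw [Finset.mem_filter] at hc
    exact sub_ne_zero.mpr fun h => absurd (hK h) (ne_of_gt hc.2)
  -- coefficient of P at n
  have hPcoeff : P.coeff n = V := by
    rw [hP, Matrix.det_apply', Polynomial.finset_sum_coeff]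
    rw [← hVdet, Matrix.det_apply']
    refine Finset.sum_congr rfl fun σ _ => ?_
    rw [Polynomial.coeff_intCast_mul]
    congr 1
    have hsum : ∑ i : Fin N, l (σ i) = n := by rw [Equiv.sum_comp σ l, hn]
    calc (∏ i : Fin N, A (σ i) i).coeff n
        = (∏ i : Fin N, A (σ i) i).coeff (∑ i : Fin N, l (σ i)) := by rw [hsum]
      _ = ∏ i : Fin N, (A (σ i) i).coeff (l (σ i)) :=
          coeff_prod_deg _ _ _ fun i _ => hA_deg (σ i) i
      _ = ∏ i : Fin N, Matrix.vandermonde K (σ i) i := by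
          refine Finset.prod_congr rfl fun i _ => ?_
          rw [hA_coeff, Matrix.vandermonde_apply]
  -- degree of P
  have hPdeg_le : P.natDegree ≤ n := by
    rw [hP, Matrix.det_apply']
    refine Polynomial.natDegree_sum_le_of_forall_le _ _ fun σ _ => ?_
    refine (Polynomial.natDegree_mul_le).trans ?_
    rw [Polynomial.natDegree_intCast, zero_add]
    refine (Polynomial.natDegree_prod_le _ _).trans ?_
    calc ∑ i : Fin N, (A (σ i) i).natDegree ≤ ∑ i : Fin N, l (σ i) :=
          Finset.sum_le_sum fun i _ => hA_deg (σ i) i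
      _ = n := by rw [Equiv.sum_comp σ l, hn]
  have hPne : P ≠ 0 := fun h => hVne (by rw [← hPcoeff, h, Polynomial.coeff_zero])
  have hPdeg : P.natDegree = n :=
    le_antisymm hPdeg_le (Polynomial.le_natDegree_of_ne_zero (by rw [hPcoeff]; exact hVne))
  have hPlead : P.leadingCoeff = V := by
    rw [Polynomial.leadingCoeff, hPdeg, hPcoeff]
  -- the monic polynomial
  refine ⟨C V⁻¹ * P, ?_, ?_, ?_⟩
  · rw [Polynomial.Monic, Polynomial.leadingCoeff_mul, Polynomial.leadingCoeff_C, hPlead,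
      inv_mul_cancel₀ hVne]
  · rw [Polynomial.natDegree_C_mul (inv_ne_zero hVne), hPdeg]
  · intro u
    have hfi : ∀ i : Fin N, f i = fun u => Complex.exp (K i * u) * (q i).eval u :=
      fun i => funext fun u => hf i u
    have hmat : (Matrix.of fun i j : Fin N => iteratedDeriv (j : ℕ) (f i) u)
        = Matrix.of fun i j : Fin N => Complex.exp (K i * u) * (A i j).eval u := by
      ext i j
      rw [Matrix.of_apply, Matrix.of_apply, hfi i, exp_mul_iteratedDeriv]
      rfl
    rw [hmat, Matrix.det_mul_column (fun i => Complex.exp (K i * u)) (fun i j => (A i j).eval u)]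
    have hexp : (∏ i : Fin N, Complex.exp (K i * u)) = Complex.exp ((∑ i, K i) * u) := by
      rw [← Complex.exp_sum, Finset.sum_mul]
    have hdet : (Matrix.det fun i j : Fin N => (A i j).eval u) = P.eval u := by
      have h := RingHom.map_det (Polynomial.evalRingHom u) A
      have h2 : (Polynomial.evalRingHom u).mapMatrix A
          = Matrix.of fun i j : Fin N => (A i j).eval u := by
        ext i j
        rfl
      rw [hP, show eval u A.det = ((evalRingHom u).mapMatrix A).det from h, h2]
      rfl
    rw [hexp, hdet, Polynomial.eval_mul, Polynomial.eval_C]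
    rw [mul_assoc, ← mul_assoc V, mul_inv_cancel₀ hVne, one_mul]
end

section
/- Let K_1,…,K_N be distinct complex numbers and let f_i(u) = e^{K_i u}(u^{λ_i} + lower order terms), i = 1,…,N, span an N-dimensional space X of quasi-exponentials, where λ_1 ≥ ⋯ ≥ λ_N ≥ 0. Let D = ∂^N + Σ_{i=1}^N F_i(u) ∂^{N−i} be the unique monic linear differential operator of order N with kernel X, and expand F_i(u) = Σ_{j≥0} F_{ij} u^{−j} as a power series in u^{−1}. Then the characteristic polynomial at infinity χ(α) = Σ_{i=0}^N F_{i0} α^{N−i} (with F_{00} = 1) equals ∏_{i=1}^N (α − K_i). -/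
open scoped BigOperators

open Polynomial Filter


noncomputable def qexpStep (k : ℂ) (p : Polynomial ℂ) : Polynomial ℂ :=
  Polynomial.C k * p + Polynomial.derivative p

lemma iteratedDeriv_qexp (k : ℂ) (b : ℕ) (p : Polynomial ℂ) :
    iteratedDeriv b (fun u => Complex.exp (k * u) * p.eval u)
      = fun u => Complex.exp (k * u) * ((qexpStep k)^[b] p).eval u := by
  induction b generalizing p with
  | zero => simp
  | succ n ih =>
    rw [iteratedDeriv_succ']
    have hd : deriv (fun u => Complex.exp (k * u) * p.eval u)
        = fun u => Complex.exp (k * u) * (qexpStep k p).eval u := by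
      funext u
      have h1 : HasDerivAt (fun u : ℂ => Complex.exp (k * u)) (Complex.exp (k * u) * k) u := by
        simpa using ((hasDerivAt_id u).const_mul k).cexp
      have h2 : HasDerivAt (fun u : ℂ => p.eval u) (p.derivative.eval u) u :=
        p.hasDerivAt u
      have : deriv (fun u => Complex.exp (k * u) * p.eval u) u = _ := (h1.mul h2).deriv
      rw [this]
      simp [qexpStep]
      ring
    rw [hd, ih, Function.iterate_succ_apply]

lemma qexpStep_iter_natDegree_le (k : ℂ) (p : Polynomial ℂ) (d : ℕ) (h : p.natDegree ≤ d)
    (b : ℕ) : ((qexpStep k)^[b] p).natDegree ≤ d := by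
  induction b with
  | zero => simpa
  | succ n ih =>
    rw [Function.iterate_succ_apply']
    refine (natDegree_add_le _ _).trans (max_le ((natDegree_mul_le).trans ?_)
      ((natDegree_derivative_le _).trans ?_))
    · simpa using ih
    · omega

lemma qexpStep_iter_coeff (k : ℂ) (p : Polynomial ℂ) (d : ℕ) (h : p.natDegree ≤ d)
    (b : ℕ) : ((qexpStep k)^[b] p).coeff d = k ^ b * p.coeff d := by
  induction b with
  | zero => simp
  | succ n ih =>
    rw [Function.iterate_succ_apply', qexpStep]
    have hlt : ((qexpStep k)^[n] p).natDegree < d + 1 :=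
      Nat.lt_succ_of_le (qexpStep_iter_natDegree_le k p d h n)
    rw [coeff_add, coeff_C_mul, coeff_derivative, coeff_eq_zero_of_natDegree_lt hlt, ih]
    ring

lemma tendsto_coe_cocompact : Tendsto (fun u : ℝ => (u : ℂ)) atTop (cocompact ℂ) := by
  rw [← Metric.cobounded_eq_cocompact, ← tendsto_norm_atTop_iff_cobounded]
  simpa using tendsto_abs_atTop_atTop

lemma tendsto_eval_div_pow (p : Polynomial ℂ) (d : ℕ) (h : p.natDegree ≤ d) :
    Tendsto (fun u : ℝ => p.eval (u : ℂ) / (u : ℂ) ^ d) atTop (nhds (p.coeff d)) := by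
  have hinv : Tendsto (fun u : ℝ => ((u : ℂ))⁻¹) atTop (nhds 0) := by
    have := (Complex.continuous_ofReal.tendsto 0).comp tendsto_inv_atTop_zero
    simpa [Function.comp_def] using this
  have hsum : Tendsto (fun u : ℝ => ∑ j ∈ Finset.range (d + 1),
      p.coeff j * ((u : ℂ))⁻¹ ^ (d - j)) atTop
      (nhds (∑ j ∈ Finset.range (d + 1), p.coeff j * (0 : ℂ) ^ (d - j))) := by
    refine tendsto_finset_sum _ fun j _ => ?_
    exact (hinv.pow (d - j)).const_mul _
  have hval : (∑ j ∈ Finset.range (d + 1), p.coeff j * (0 : ℂ) ^ (d - j)) = p.coeff d := by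
    rw [Finset.sum_eq_single d]
    · simp
    · intro j hj hne
      have : d - j ≠ 0 := by
        simp only [Finset.mem_range] at hj; omega
      simp [zero_pow this]
    · intro hd; exact absurd (Finset.self_mem_range_succ d) hd
  rw [hval] at hsum
  refine hsum.congr' ?_
  filter_upwards [eventually_ge_atTop 1] with u hu
  have hu0 : (u : ℂ) ≠ 0 := by
    simpa using (by positivity : u ≠ 0)
  rw [eval_eq_sum_range' (Nat.lt_succ_of_le h), Finset.sum_div]
  refine Finset.sum_congr rfl fun j hj => ?_
  have hjd : j ≤ d := by simpa [Nat.lt_succ_iff] using hj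
  have hpow : (u : ℂ) ^ d = (u : ℂ) ^ j * (u : ℂ) ^ (d - j) := by
    rw [← pow_add]; congr 1; omega
  rw [hpow]
  field_simp
  rw [mul_assoc, ← mul_pow, one_div, inv_mul_cancel₀ hu0, one_pow, mul_one]


lemma coeff_prod_of_natDegree_le' {ι : Type*} (s : Finset ι) (f : ι → Polynomial ℂ)
    (n : ι → ℕ) (h : ∀ i ∈ s, (f i).natDegree ≤ n i) :
    (∏ i ∈ s, f i).coeff (∑ i ∈ s, n i) = ∏ i ∈ s, (f i).coeff (n i) := by
  induction s using Finset.cons_induction with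
  | empty => simp
  | cons a s ha ih =>
    rw [Finset.prod_cons, Finset.sum_cons, Finset.prod_cons,
      ← ih (fun i hi => h i (Finset.mem_cons_of_mem hi))]
    exact coeff_mul_add_eq_of_natDegree_le (h a (Finset.mem_cons_self a s))
      ((natDegree_prod_le s f).trans (Finset.sum_le_sum
        fun i hi => h i (Finset.mem_cons_of_mem hi)))

/-- If `D = ∂^N + Σᵢ Fᵢ(u)∂^{N−i}` is the monic differential operator
annihilating the quasi-exponentials `fᵢ(u) = e^{Kᵢu}(u^{λᵢ} + ⋯)` (wherever the Wronskian is
nonzero), and `Fᵢ(u) → F_{i0}` as `u → ∞`, then the characteristic polynomial at infinity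
`χ(α) = α^N + Σᵢ F_{i0} α^{N−i}` equals `∏ᵢ (α − Kᵢ)`. -/
theorem characteristicPolynomial_at_infinity (N : ℕ) (hN : 0 < N) (K : Fin N → ℂ)
    (hK : Function.Injective K) (l : Fin N → ℕ) (hl : Antitone l)
    (q : Fin N → Polynomial ℂ) (hq : ∀ i, (q i).Monic) (hdeg : ∀ i, (q i).natDegree = l i)
    (f : Fin N → ℂ → ℂ)
    (hf : ∀ i u, f i u = Complex.exp (K i * u) * (q i).eval u)
    (F : Fin N → ℂ → ℂ) (c : Fin N → ℂ)
    (hker : ∀ i u,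
      Matrix.det (Matrix.of fun a b : Fin N => iteratedDeriv (b : ℕ) (f a) u) ≠ 0 →
      iteratedDeriv N (f i) u
        + ∑ k : Fin N, F k u * iteratedDeriv (N - 1 - (k : ℕ)) (f i) u = 0)
    (hc : ∀ k, Filter.Tendsto (F k) (Filter.cocompact ℂ) (nhds (c k))) :
    ∀ α : ℂ, α ^ N + ∑ k : Fin N, c k * α ^ (N - 1 - (k : ℕ)) = ∏ i, (α - K i) := by
  classical
  have hroot : ∀ i, K i ^ N + ∑ k : Fin N, c k * K i ^ (N - 1 - (k : ℕ)) = 0 := by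
    classical
    set P : Fin N → ℕ → Polynomial ℂ := fun a b => (qexpStep (K a))^[b] (q a) with hPdef
    have hPdeg : ∀ a b, (P a b).natDegree ≤ l a := fun a b =>
      qexpStep_iter_natDegree_le _ _ _ (le_of_eq (hdeg a)) b
    have hPcoeff : ∀ a b, (P a b).coeff (l a) = K a ^ b := by
      intro a b
      rw [hPdef]
      simp only []
      rw [qexpStep_iter_coeff _ _ _ (le_of_eq (hdeg a)), ← hdeg a, coeff_natDegree,
        (hq a).leadingCoeff, mul_one]
    have hfd : ∀ a b, iteratedDeriv b (f a) = fun u => Complex.exp (K a * u) * (P a b).eval u := by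
      intro a b
      have hfa : f a = fun u => Complex.exp (K a * u) * (q a).eval u := funext (hf a)
      rw [hfa, iteratedDeriv_qexp]
    set Rp : Polynomial ℂ := (Matrix.of fun a b : Fin N => P a (b : ℕ)).det with hRpdef
    have hW : ∀ u : ℂ,
        Matrix.det (Matrix.of fun a b : Fin N => iteratedDeriv (b : ℕ) (f a) u)
          = (∏ a, Complex.exp (K a * u)) * Rp.eval u := by
      intro u
      have hmap : Rp.eval u = (Matrix.of fun a b : Fin N => (P a (b : ℕ)).eval u).det := by
        have h := RingHom.map_det (Polynomial.evalRingHom u)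
          (Matrix.of fun a b : Fin N => P a (b : ℕ))
        simpa [Matrix.map, hRpdef] using h
      have hfac : (Matrix.of fun a b : Fin N => iteratedDeriv (b : ℕ) (f a) u)
          = Matrix.diagonal (fun a => Complex.exp (K a * u)) *
            (Matrix.of fun a b : Fin N => (P a (b : ℕ)).eval u) := by
        ext a b
        rw [Matrix.diagonal_mul]
        simp [hfd]
      rw [hfac, Matrix.det_mul, Matrix.det_diagonal, hmap]
    have hRcoeff : Rp.coeff (∑ a, l a) = (Matrix.vandermonde K).det := by
      rw [hRpdef, Matrix.det_apply', Matrix.det_apply', finset_sum_coeff]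
      refine Finset.sum_congr rfl fun σ _ => ?_
      rw [← C_eq_intCast, coeff_C_mul]
      congr 1
      have hsum : (∑ a, l a) = ∑ i, l (σ i) := (Equiv.sum_comp σ l).symm
      simp only [Matrix.of_apply]
      rw [hsum, coeff_prod_of_natDegree_le' Finset.univ _ (fun i => l (σ i))
        (fun i _ => hPdeg (σ i) (i : ℕ))]
      refine Finset.prod_congr rfl fun i _ => ?_
      simp only [Matrix.of_apply, Matrix.vandermonde]
      exact hPcoeff (σ i) (i : ℕ)
    have hvne : (Matrix.vandermonde K).det ≠ 0 := by
      rw [Ne, Matrix.det_vandermonde_eq_zero_iff]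
      rintro ⟨i, j, hij, hne⟩
      exact hne (hK hij)
    have hRne : Rp ≠ 0 := fun h0 => hvne (by rw [← hRcoeff, h0, coeff_zero])
    -- bound on real roots
    have hfin : {x : ℝ | Rp.eval (x : ℂ) = 0}.Finite := by
      have h1 : Set.Finite {z : ℂ | Rp.IsRoot z} := Polynomial.finite_setOf_isRoot hRne
      have h2 : {x : ℝ | Rp.eval (x : ℂ) = 0}
          = (fun x : ℝ => (x : ℂ)) ⁻¹' {z : ℂ | Rp.IsRoot z} := rfl
      rw [h2]
      exact h1.preimage (Set.injOn_of_injective Complex.ofReal_injective)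
    obtain ⟨B, hB⟩ := hfin.bddAbove
    intro i
    have hev : ∀ᶠ u : ℝ in atTop,
        (P i N).eval (u : ℂ) / (u : ℂ) ^ (l i)
          + ∑ k : Fin N, F k (u : ℂ) * ((P i (N - 1 - (k : ℕ))).eval (u : ℂ) / (u : ℂ) ^ (l i))
          = 0 := by
      filter_upwards [eventually_gt_atTop B, eventually_ge_atTop 1] with u huB hu1
      have hu0 : (u : ℂ) ≠ 0 := by
        simp only [Ne, Complex.ofReal_eq_zero]
        intro h; rw [h] at hu1; linarith
      have hRu : Rp.eval (u : ℂ) ≠ 0 := by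
        intro h
        exact absurd (hB h) (not_le.2 huB)
      have hWne : Matrix.det (Matrix.of fun a b : Fin N => iteratedDeriv (b : ℕ) (f a) (u : ℂ)) ≠ 0 := by
        rw [hW]
        exact mul_ne_zero (Finset.prod_ne_zero_iff.2 fun a _ => Complex.exp_ne_zero _) hRu
      have heq := hker i (u : ℂ) hWne
      rw [hfd i N] at heq
      simp only [hfd i] at heq
      have h2 : Complex.exp (K i * u) *
          ((P i N).eval (u : ℂ) + ∑ k : Fin N, F k (u : ℂ) * (P i (N - 1 - (k : ℕ))).eval (u : ℂ)) = 0 := by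
        rw [mul_add, Finset.mul_sum, ← heq]
        congr 1
        exact Finset.sum_congr rfl fun k _ => by ring
      have hinner : (P i N).eval (u : ℂ)
          + ∑ k : Fin N, F k (u : ℂ) * (P i (N - 1 - (k : ℕ))).eval (u : ℂ) = 0 :=
        (mul_eq_zero.mp h2).resolve_left (Complex.exp_ne_zero _)
      have : (P i N).eval (u : ℂ) / (u : ℂ) ^ (l i)
          + ∑ k : Fin N, F k (u : ℂ) * ((P i (N - 1 - (k : ℕ))).eval (u : ℂ) / (u : ℂ) ^ (l i))
          = ((P i N).eval (u : ℂ)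
            + ∑ k : Fin N, F k (u : ℂ) * (P i (N - 1 - (k : ℕ))).eval (u : ℂ)) / (u : ℂ) ^ (l i) := by
        rw [add_div, Finset.sum_div]
        congr 1
        exact Finset.sum_congr rfl fun k _ => (mul_div_assoc _ _ _).symm
      rw [this, hinner, zero_div]
    have hlim : Tendsto (fun u : ℝ => (P i N).eval (u : ℂ) / (u : ℂ) ^ (l i)
        + ∑ k : Fin N, F k (u : ℂ) * ((P i (N - 1 - (k : ℕ))).eval (u : ℂ) / (u : ℂ) ^ (l i)))
        atTop (nhds (K i ^ N + ∑ k : Fin N, c k * K i ^ (N - 1 - (k : ℕ)))) := by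
      refine Tendsto.add ?_ (tendsto_finset_sum _ fun k _ => ?_)
      · have h := tendsto_eval_div_pow (P i N) (l i) (hPdeg i N)
        rwa [hPcoeff i N] at h
      · have h := tendsto_eval_div_pow (P i (N - 1 - (k : ℕ))) (l i) (hPdeg i _)
        rw [hPcoeff i _] at h
        exact ((hc k).comp tendsto_coe_cocompact).mul h
    have hev' : (fun u : ℝ => (P i N).eval (u : ℂ) / (u : ℂ) ^ (l i)
        + ∑ k : Fin N, F k (u : ℂ) * ((P i (N - 1 - (k : ℕ))).eval (u : ℂ) / (u : ℂ) ^ (l i)))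
        =ᶠ[atTop] fun _ => (0 : ℂ) := hev
    have h0 : Tendsto (fun _ : ℝ => (0 : ℂ)) atTop
        (nhds (K i ^ N + ∑ k : Fin N, c k * K i ^ (N - 1 - (k : ℕ)))) :=
      Filter.Tendsto.congr' hev' hlim
    exact (tendsto_nhds_unique h0 tendsto_const_nhds)
  set S : Polynomial ℂ := ∑ k : Fin N, C (c k) * X ^ (N - 1 - (k : ℕ)) with hS
  set χ : Polynomial ℂ := X ^ N + S with hχ
  set Pr : Polynomial ℂ := ∏ i, (X - C (K i)) with hPrd
  have hχev : ∀ z : ℂ, χ.eval z = z ^ N + ∑ k : Fin N, c k * z ^ (N - 1 - (k : ℕ)) := by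
    intro z; simp [hχ, hS, eval_finset_sum]
  have hPrev : ∀ z : ℂ, Pr.eval z = ∏ i, (z - K i) := by
    intro z; simp [hPrd, eval_prod]
  have hSdeg : S.degree < (N : WithBot ℕ) := by
    refine (degree_sum_le _ _).trans_lt ?_
    rw [Finset.sup_lt_iff (by exact_mod_cast WithBot.bot_lt_coe N)]
    intro k _
    refine (degree_mul_le _ _).trans_lt ?_
    have h1 : (C (c k)).degree ≤ 0 := degree_C_le
    have h2 : (X ^ (N - 1 - (k : ℕ)) : Polynomial ℂ).degree = (N - 1 - (k : ℕ) : ℕ) :=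
      degree_X_pow _
    calc (C (c k)).degree + (X ^ (N - 1 - (k : ℕ)) : Polynomial ℂ).degree
        ≤ 0 + ((N - 1 - (k : ℕ) : ℕ) : WithBot ℕ) := add_le_add h1 h2.le
      _ = ((N - 1 - (k : ℕ) : ℕ) : WithBot ℕ) := by rw [zero_add]
      _ < (N : WithBot ℕ) := by exact_mod_cast (by omega : N - 1 - (k : ℕ) < N)
  have hPrmonic : Pr.Monic := monic_prod_of_monic _ _ fun i _ => monic_X_sub_C _
  have hPrdeg : Pr.degree = (N : WithBot ℕ) := by
    rw [hPrd, degree_prod]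
    simp [degree_X_sub_C]
  have hXdeg : (X ^ N : Polynomial ℂ).degree = (N : WithBot ℕ) := degree_X_pow _
  have hsub : (Pr - X ^ N).degree < (N : WithBot ℕ) := by
    have := degree_sub_lt (hPrdeg.trans hXdeg.symm) (hPrmonic.ne_zero)
      (by rw [hPrmonic.leadingCoeff, (monic_X_pow N).leadingCoeff])
    rwa [hPrdeg] at this
  have hdlt : (χ - Pr).degree < (N : WithBot ℕ) := by
    have : χ - Pr = S - (Pr - X ^ N) := by rw [hχ]; ring
    rw [this]
    exact (degree_sub_le _ _).trans_lt (max_lt hSdeg hsub)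
  have heval : ∀ i, (χ - Pr).eval (K i) = 0 := by
    intro i
    rw [eval_sub, hχev, hPrev, hroot i,
      Finset.prod_eq_zero (Finset.mem_univ i) (sub_self (K i))]
    simp
  have hd0 : χ - Pr = 0 := by
    by_contra hne
    refine hne (Polynomial.eq_zero_of_natDegree_lt_card_of_eval_eq_zero _ hK heval ?_)
    rw [Fintype.card_fin]
    exact (natDegree_lt_iff_degree_lt hne).2 hdlt
  have hEq : χ = Pr := sub_eq_zero.mp hd0
  intro α
  rw [← hχev, ← hPrev, hEq]
end

section
/- Let A be a Frobenius algebra and I ⊆ A an ideal. The regular action of A on itself induces an action of A/I on Ann I = {a ∈ A : aI = 0}, and the resulting A/I-module Ann I is isomorphic to the coregular representation of A/I, i.e., to the dual space (A/I)^* with the action (a·φ)(b) = φ(ab). In particular, the image of A/I in End(Ann I) is a maximal commutative subalgebra. -/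
/-- Let `A` be a Frobenius algebra and `I ⊆ A` an ideal. Then the
`A/I`-module `Ann I = {a : aI = 0}` (with the action induced by multiplication in `A`) is
isomorphic to the coregular representation `(A/I)^*` with `(a·φ)(b) = φ(ab)`; in particular
every `ℂ`-linear endomorphism of `Ann I` commuting with the `A`-action is given by the
action of some element of `A`. -/
theorem annihilator_iso_coregular (A : Type) [CommRing A] [Algebra ℂ A]
    [FiniteDimensional ℂ A] (B : LinearMap.BilinForm ℂ A)
    (hsym : ∀ a b : A, B a b = B b a)
    (hinv : ∀ a b c : A, B (a * b) c = B a (b * c))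
    (hnd : ∀ a : A, (∀ b, B a b = 0) → a = 0)
    (I : Ideal A) :
    (∃ e : Submodule.restrictScalars ℂ (Submodule.annihilator I) ≃ₗ[ℂ]
        Module.Dual ℂ (A ⧸ I),
      ∀ (x : A) (hx : x ∈ Submodule.annihilator I) (a b : A),
        e ⟨a * x, (Submodule.annihilator I).mul_mem_left a hx⟩ (Ideal.Quotient.mk I b)
          = e ⟨x, hx⟩ (Ideal.Quotient.mk I (a * b))) ∧
    (∀ T : Module.End ℂ (Submodule.restrictScalars ℂ (Submodule.annihilator I)),
      (∀ (a x : A) (hx : x ∈ Submodule.annihilator I),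
        (T ⟨a * x, (Submodule.annihilator I).mul_mem_left a hx⟩ : A)
          = a * (T ⟨x, hx⟩ : A)) →
      ∃ a : A, ∀ (x : A) (hx : x ∈ Submodule.annihilator I),
        (T ⟨x, hx⟩ : A) = a * x) := by
  classical
  set N := Submodule.restrictScalars ℂ (Submodule.annihilator I) with hNdef
  -- B is injective as a map A →ₗ Dual A, hence surjective
  have hBinj : Function.Injective (B : A →ₗ[ℂ] Module.Dual ℂ A) := by
    rw [← LinearMap.ker_eq_bot, LinearMap.ker_eq_bot']
    intro a h
    exact hnd a fun b => by rw [h]; rfl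
  have hBsurj : Function.Surjective (B : A →ₗ[ℂ] Module.Dual ℂ A) :=
    (LinearMap.injective_iff_surjective_of_finrank_eq_finrank
      Subspace.dual_finrank_eq.symm).mp hBinj
  -- basic facts about the annihilator
  have hann : ∀ x ∈ Submodule.annihilator I, ∀ i ∈ I, x * i = 0 := by
    intro x hx i hi
    have := Submodule.mem_annihilator.mp hx i hi
    rwa [smul_eq_mul] at this
  have hBI : ∀ x ∈ Submodule.annihilator I, ∀ i ∈ I, B x i = 0 := by
    intro x hx i hi
    have h0 : B (x * i) 1 = 0 := by rw [hann x hx i hi]; simp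
    rw [hinv, mul_one] at h0
    exact h0
  -- the map A → (N →ₗ ℂ), b ↦ (x ↦ B b x)
  set G : A →ₗ[ℂ] (N →ₗ[ℂ] ℂ) := B.compl₂ N.subtype with hGdef
  have hGker : I.restrictScalars ℂ ≤ LinearMap.ker G := by
    intro i hi
    rw [LinearMap.mem_ker]
    ext x
    have : G i x = B i x.1 := rfl
    rw [this, hsym]
    exact hBI x.1 x.2 i hi
  set Fq : (A ⧸ I.restrictScalars ℂ) →ₗ[ℂ] (N →ₗ[ℂ] ℂ) :=
    Submodule.liftQ (I.restrictScalars ℂ) G hGker with hFqdef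
  set eqv := Submodule.Quotient.restrictScalarsEquiv ℂ (I : Submodule A A) with heqv
  set F : (A ⧸ I) →ₗ[ℂ] (N →ₗ[ℂ] ℂ) := Fq ∘ₗ (eqv.symm : _ →ₗ[ℂ] _) with hFdef
  set elin : N →ₗ[ℂ] Module.Dual ℂ (A ⧸ I) := F.flip with helindef
  have helin : ∀ (x : N) (b : A), elin x (Ideal.Quotient.mk I b) = B x.1 b := by
    intro x b
    show F (Ideal.Quotient.mk I b) x = B x.1 b
    have h1 : (Ideal.Quotient.mk I b : A ⧸ I) = Submodule.Quotient.mk b := rfl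
    rw [hFdef, hFqdef, heqv]
    simp only [LinearMap.comp_apply, LinearEquiv.coe_coe, h1,
      Submodule.Quotient.restrictScalarsEquiv_symm_mk, Submodule.liftQ_apply]
    exact hsym b x.1
  have hinj : Function.Injective elin := by
    rw [← LinearMap.ker_eq_bot, LinearMap.ker_eq_bot']
    intro x hx
    have hx1 : x.1 = 0 := by
      apply hnd
      intro b
      rw [← helin x b, hx]
      rfl
    exact Subtype.ext hx1
  have hsurjE : Function.Surjective elin := by
    intro φ
    obtain ⟨x, hxB⟩ := hBsurj (φ ∘ₗ (Ideal.Quotient.mkₐ ℂ I).toLinearMap)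
    have hx : x ∈ Submodule.annihilator I := by
      rw [Submodule.mem_annihilator]
      intro i hi
      rw [smul_eq_mul]
      apply hnd
      intro b
      rw [hinv]
      have := LinearMap.congr_fun hxB (i * b)
      rw [this]
      have h0 : (Ideal.Quotient.mk I (i * b) : A ⧸ I) = 0 :=
        (Ideal.Quotient.eq_zero_iff_mem).mpr (I.mul_mem_right b hi)
      simp only [LinearMap.comp_apply, AlgHom.toLinearMap_apply, Ideal.Quotient.mkₐ_eq_mk]
      rw [h0, map_zero]
    refine ⟨⟨x, hx⟩, ?_⟩
    apply LinearMap.ext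
    intro q
    obtain ⟨b, rfl⟩ := Ideal.Quotient.mk_surjective q
    rw [helin]
    have := LinearMap.congr_fun hxB b
    rw [this]
    simp
  constructor
  · refine ⟨LinearEquiv.ofBijective elin (show Function.Bijective elin from ⟨hinj, hsurjE⟩), ?_⟩
    intro x hx a b
    simp only [LinearEquiv.ofBijective_apply]
    rw [helin, helin]
    calc B (a * x) b = B (x * a) b := by rw [mul_comm]
    _ = B x (a * b) := hinv x a b
  · intro T hT
    obtain ⟨L, hL⟩ := LinearMap.exists_extend
      ((B.flip 1) ∘ₗ (N.subtype ∘ₗ (T : N →ₗ[ℂ] N)))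
    obtain ⟨a, ha⟩ := hBsurj L
    refine ⟨a, ?_⟩
    intro x hx
    have key : ∀ b : A, B ((T ⟨x, hx⟩ : A) - a * x) b = 0 := by
      intro b
      have h1 : B (T ⟨x, hx⟩ : A) b = B ((T ⟨x, hx⟩ : A) * b) 1 := by
        rw [hinv, mul_one]
      have h2 : (T ⟨x, hx⟩ : A) * b = (T ⟨b * x, (Submodule.annihilator I).mul_mem_left b hx⟩ : A) := by
        rw [hT b x hx, mul_comm]
      have h3 : B (T ⟨b * x, (Submodule.annihilator I).mul_mem_left b hx⟩ : A) 1
          = L (b * x) := by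
        have h := LinearMap.congr_fun hL
          (⟨b * x, (Submodule.annihilator I).mul_mem_left b hx⟩ : N)
        exact h.symm
      have h4 : L (b * x) = B a (b * x) := (LinearMap.congr_fun ha (b * x)).symm
      have h5 : B a (b * x) = B (a * x) b := by
        rw [← hinv a b x, hsym (a * b) x, ← hinv x a b, mul_comm x a]
      rw [map_sub, LinearMap.sub_apply, h1, h2, h3, h4, h5, sub_self]
    exact sub_eq_zero.mp (hnd _ key)
end
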